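/- arXiv:2510.21092 — 5 statements merged into one kernel-verified Lean document; each statement's English description precedes it below -/
import Mathlib

section
/- Let d ≥ 1 be an integer and 0 < γ < 1/(4d−1). Let N be a shifted geometric random variable with P(N = i) = (2d/(2d+1))^i · (1/(2d+1)) for i ≥ 0, let (Y_j)_{j≥1} be i.i.d. Bernoulli(γ/(γ+1)) independent of N, and let Y = Y_1 + ⋯ + Y_{2d+N}. Let (Y^{(n)}_j)_{n≥0, j≥1} be i.i.d. copies of Y on a probability space, define the Galton–Watson process X_0 = 1 and X_{n+1} = ∑_{j=1}^{X_n} Y^{(n)}_j, and let π = ∑_{n≥0} X_n ∈ ℕ ∪ {∞} be its total progeny. Then there exist a finite constant C_1 and a real s_1 > 1 such that P(π > K) ≤ C_1 s_1^{−K} for all K ∈ ℕ. -/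
/-!
Let `F` be the generating function of the offspring law and `T n = X 0 + ⋯ + X (n-1)`.
Given the first `n` generations, `X (n+1)` is a sum of `X n` fresh offspring variables, so
`E[λ^{T (n+1)} u^{X (n+1)}] = E[λ^{T n} (λ F(u))^{X n}]`. If `F(t) < t` for some `t > 1`, then
`λ = t / F(t) > 1` and `u ↦ λ F(u)` maps `[0, t]` into itself, whence `E[λ^{T n}] ≤ t` for all `n`
and, by Markov's inequality, `P(π > K) ≤ t λ^{-(K+1)}`.

Here `Y` has generating function `F(1 + s) = (1 + p s)^{2d} / (1 - 2d p s)` with `p = γ/(γ+1)`;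
its mean is `4dp < 1`, which makes `F(1 + s) < 1 + s` for a small explicit `s > 0`.
-/

open MeasureTheory ProbabilityTheory Finset
open scoped ENNReal

section Independence

variable {Ω ι β : Type*} [MeasurableSpace β]

abbrev subfamilySigma (W : ι → Ω → β) (A : Set ι) : MeasurableSpace Ω :=
  ⨆ i ∈ A, MeasurableSpace.comap (W i) inferInstance

variable {W : ι → Ω → β}

lemma subfamilySigma_le [MeasurableSpace Ω] (hW : ∀ i, Measurable (W i)) (A : Set ι) :
    subfamilySigma W A ≤ ‹MeasurableSpace Ω› :=
  iSup₂_le fun i _ => (hW i).comap_le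

lemma subfamilySigma_mono {A B : Set ι} (h : A ⊆ B) : subfamilySigma W A ≤ subfamilySigma W B :=
  biSup_mono h

lemma measurable_subfamilySigma {A : Set ι} {i : ι} (hi : i ∈ A) :
    Measurable[subfamilySigma W A] (W i) :=
  Measurable.of_comap_le (le_iSup₂ (f := fun i _ => MeasurableSpace.comap (W i) inferInstance) i hi)

lemma ProbabilityTheory.iIndepFun.indep_subfamilySigma [MeasurableSpace Ω] {P : Measure Ω}
    (hW : iIndepFun W P) (hWm : ∀ i, Measurable (W i)) {A : Set ι} {p : ι} (hp : p ∉ A) :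
    Indep (subfamilySigma W A) (MeasurableSpace.comap (W p) inferInstance) P := by
  simpa [subfamilySigma] using indep_iSup_of_disjoint (fun i => (hWm i).comap_le) hW.iIndep
    (Set.disjoint_singleton_right.mpr hp)

lemma measurable_sum_range_of_measurable {m : MeasurableSpace Ω} {R : Ω → ℕ} (hR : Measurable R)
    {V : ℕ → Ω → ℕ} (hV : ∀ j, Measurable (V j)) :
    Measurable fun ω => ∑ j ∈ range (R ω), V j ω :=
  (measurable_from_prod_countable_left (f := fun q : Ω × ℕ => ∑ j ∈ range q.2, V j q.1)
    fun k => Finset.measurable_sum (range k) fun j _ => hV j).comp (measurable_id.prodMk hR)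

end Independence

section RandomSums

variable {Ω ι : Type*} [MeasurableSpace Ω] {P : Measure Ω} {W : ι → Ω → ℕ}

lemma lintegral_eq_tsum_setLIntegral {R : Ω → ℕ} (hR : Measurable R) {g : ℕ → Ω → ℝ≥0∞}
    (hg : ∀ m, Measurable (g m)) :
    ∫⁻ ω, g (R ω) ω ∂P = ∑' m, ∫⁻ ω in {ω | R ω = m}, g m ω ∂P := by
  have hslice : ∀ m, MeasurableSet {ω | R ω = m} := fun m => hR (measurableSet_singleton m)
  have hsplit : (fun ω => g (R ω) ω) = fun ω => ∑' m, {ω | R ω = m}.indicator (g m) ω := by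
    funext ω
    rw [tsum_eq_single (R ω) fun m hm => Set.indicator_of_notMem (s := {ω | R ω = m})
      (fun h : R ω = m => hm h.symm) _]
    exact (Set.indicator_of_mem (s := {ω | R ω = R ω}) rfl (g (R ω))).symm
  rw [hsplit, lintegral_tsum fun m => ((hg m).indicator (hslice m)).aemeasurable]
  exact tsum_congr fun m => lintegral_indicator (hslice m) _

lemma lintegral_mul_prod_pow (hW : iIndepFun W P) (hWm : ∀ i, Measurable (W i)) {A : Set ι}
    {e : ℕ → ι} (he : ∀ j, e j ∉ A) (he_inj : Function.Injective e) {u c : ℝ≥0∞}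
    (hc : ∀ j, ∫⁻ ω, u ^ W (e j) ω ∂P = c) {H : Ω → ℝ≥0∞} (hH : Measurable[subfamilySigma W A] H)
    (m : ℕ) :
    ∫⁻ ω, H ω * ∏ j ∈ range m, u ^ W (e j) ω ∂P = (∫⁻ ω, H ω ∂P) * c ^ m := by
  induction m with
  | zero => simp
  | succ m ih =>
    set A' := A ∪ e '' Set.Iio m
    have hH' : Measurable[subfamilySigma W A'] fun ω => H ω * ∏ j ∈ range m, u ^ W (e j) ω :=
      (hH.mono (subfamilySigma_mono Set.subset_union_left) le_rfl).mul <|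
        Finset.measurable_prod _ fun j hj => Measurable.of_discrete.comp <|
          measurable_subfamilySigma <| Or.inr ⟨j, Finset.mem_range.mp hj, rfl⟩
    have hm : e m ∉ A' := by
      rintro (h | ⟨j, hj, hje⟩)
      exacts [he m h, (he_inj hje ▸ hj : m < m).false]
    calc ∫⁻ ω, H ω * ∏ j ∈ range (m + 1), u ^ W (e j) ω ∂P
        = ∫⁻ ω, (H ω * ∏ j ∈ range m, u ^ W (e j) ω) * u ^ W (e m) ω ∂P := by
          simp only [prod_range_succ, mul_assoc]
      _ = (∫⁻ ω, H ω * ∏ j ∈ range m, u ^ W (e j) ω ∂P) * c := by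
          rw [lintegral_mul_eq_lintegral_mul_lintegral_of_independent_measurableSpace
            (g := fun ω => u ^ W (e m) ω)
            (subfamilySigma_le hWm A') (hWm (e m)).comap_le (hW.indep_subfamilySigma hWm hm) hH'
            (Measurable.of_discrete.comp (comap_measurable _)), hc]
      _ = (∫⁻ ω, H ω ∂P) * c ^ (m + 1) := by rw [ih, pow_succ, mul_assoc]

lemma lintegral_mul_pow_sum_range (hW : iIndepFun W P) (hWm : ∀ i, Measurable (W i)) {A : Set ι}
    {e : ℕ → ι} (he : ∀ j, e j ∉ A) (he_inj : Function.Injective e) {u c : ℝ≥0∞}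
    (hc : ∀ j, ∫⁻ ω, u ^ W (e j) ω ∂P = c) {H : Ω → ℝ≥0∞} (hH : Measurable[subfamilySigma W A] H)
    {R : Ω → ℕ} (hR : Measurable[subfamilySigma W A] R) :
    ∫⁻ ω, H ω * u ^ (∑ j ∈ range (R ω), W (e j) ω) ∂P = ∫⁻ ω, H ω * c ^ R ω ∂P := by
  have hle := subfamilySigma_le hWm A
  have hslice : ∀ m, MeasurableSet[subfamilySigma W A] {ω | R ω = m} :=
    fun m => hR (measurableSet_singleton m)
  have hHm : Measurable H := hH.mono hle le_rfl
  have hRm : Measurable R := hR.mono hle le_rfl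
  have hprod : ∀ m, Measurable fun ω => ∏ j ∈ range m, u ^ W (e j) ω :=
    fun m => Finset.measurable_prod _ fun j _ => Measurable.of_discrete.comp (hWm (e j))
  simp_rw [← prod_pow_eq_pow_sum]
  rw [lintegral_eq_tsum_setLIntegral (g := fun m ω => H ω * ∏ j ∈ range m, u ^ W (e j) ω) hRm
      fun m => hHm.mul (hprod m),
    lintegral_eq_tsum_setLIntegral (g := fun m ω => H ω * c ^ m) hRm
      fun m => hHm.mul measurable_const]
  refine tsum_congr fun m => ?_
  have hHslice := hH.indicator (hslice m)
  rw [← lintegral_indicator (hle _ (hslice m)), ← lintegral_indicator (hle _ (hslice m))]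
  simp only [Set.indicator_mul_left]
  rw [lintegral_mul_prod_pow hW hWm he he_inj hc hHslice,
    lintegral_mul_const _ (hHslice.mono hle le_rfl)]

end RandomSums

lemma natCast_lt_tsum_iff (x : ℕ → ℕ) (K : ℕ) :
    (K : ℕ∞) < ∑' n, (x n : ℕ∞) ↔ ∃ n, K < ∑ k ∈ range n, x k := by
  have hsum : Summable fun n => (x n : ℕ∞) := (hasSum_of_isLUB _ isLUB_iSup).summable
  constructor
  · intro hK
    by_contra! hle
    refine hK.not_ge (tsum_le_of_sum_le' zero_le fun t => ?_)
    obtain ⟨n, ht⟩ := t.exists_nat_subset_range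
    calc ∑ k ∈ t, (x k : ℕ∞) ≤ ∑ k ∈ range n, (x k : ℕ∞) := sum_le_sum_of_subset ht
      _ ≤ K := by exact_mod_cast hle n
  · rintro ⟨n, hn⟩
    calc (K : ℕ∞) < ∑ k ∈ range n, (x k : ℕ∞) := by exact_mod_cast hn
      _ ≤ ∑' k, (x k : ℕ∞) := hsum.sum_le_tsum _ fun _ _ => zero_le

lemma pow_mul_measure_lt_tsum_le {Ω : Type*} [MeasurableSpace Ω] {P : Measure Ω}
    {X : ℕ → Ω → ℕ} (hX : ∀ n, Measurable (X n)) {s C : ℝ≥0∞} (hs : 1 ≤ s)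
    (h : ∀ n, ∫⁻ ω, s ^ (∑ k ∈ range n, X k ω) ∂P ≤ C) (K : ℕ) :
    s ^ (K + 1) * P {ω | (K : ℕ∞) < ∑' n, (X n ω : ℕ∞)} ≤ C := by
  have hunion : {ω | (K : ℕ∞) < ∑' n, (X n ω : ℕ∞)} = ⋃ n, {ω | K < ∑ k ∈ range n, X k ω} := by
    ext ω
    simp only [Set.mem_ofPred_eq, Set.mem_iUnion, natCast_lt_tsum_iff]
  have hmono : Monotone fun n => {ω | K < ∑ k ∈ range n, X k ω} := fun a b hab =>
    Set.ofPred_subset_ofPred.mpr fun ω hω =>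
      hω.trans_le (sum_le_sum_of_subset (range_subset_range.mpr hab))
  rw [hunion, hmono.measure_iUnion, ENNReal.mul_iSup]
  refine iSup_le fun n => le_trans ?_ (h n)
  calc s ^ (K + 1) * P {ω | K < ∑ k ∈ range n, X k ω}
      ≤ s ^ (K + 1) * P {ω | s ^ (K + 1) ≤ s ^ (∑ k ∈ range n, X k ω)} :=
        mul_le_mul_right (measure_mono fun ω hω => pow_le_pow_right₀ hs hω) _
    _ ≤ ∫⁻ ω, s ^ (∑ k ∈ range n, X k ω) ∂P :=
        mul_meas_ge_le_lintegral₀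
          (Measurable.of_discrete.comp (Finset.measurable_sum _ fun k _ => hX k)).aemeasurable _

section GaltonWatson

variable {Ω : Type*} {Z : ℕ → ℕ → Ω → ℕ}

def galtonWatson (Z : ℕ → ℕ → Ω → ℕ) : ℕ → Ω → ℕ
  | 0 => fun _ => 1
  | n + 1 => fun ω => ∑ j ∈ range (galtonWatson Z n ω), Z n j ω

lemma measurable_galtonWatson (n : ℕ) :
    Measurable[subfamilySigma (Function.uncurry Z) {q | q.1 < n}] (galtonWatson Z n) := by
  induction n with
  | zero => exact measurable_const
  | succ n ih =>
    exact measurable_sum_range_of_measurable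
      (ih.mono (subfamilySigma_mono fun q hq => Nat.lt_succ_of_lt hq) le_rfl)
      fun j => measurable_subfamilySigma (W := Function.uncurry Z) (i := (n, j)) n.lt_succ_self

lemma measurable_sum_range_galtonWatson (n : ℕ) :
    Measurable[subfamilySigma (Function.uncurry Z) {q | q.1 < n}]
      fun ω => ∑ k ∈ range n, galtonWatson Z k ω :=
  Finset.measurable_sum _ fun k hk => (measurable_galtonWatson k).mono
    (subfamilySigma_mono fun _ hq => lt_trans hq (mem_range.mp hk)) le_rfl

lemma eq_galtonWatson {X : ℕ → Ω → ℕ} (hX0 : ∀ ω, X 0 ω = 1)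
    (hXsucc : ∀ n ω, X (n + 1) ω = ∑ j ∈ range (X n ω), Z n j ω) : X = galtonWatson Z := by
  funext n
  induction n with
  | zero => exact funext hX0
  | succ n ih => funext ω; rw [hXsucc, ih]; rfl

variable [MeasurableSpace Ω] {P : Measure Ω} {μ : Measure ℕ}

lemma lintegral_pow_sum_mul_pow_galtonWatson_succ (hZm : ∀ n j, Measurable (Z n j))
    (hZ : iIndepFun (Function.uncurry Z) P) (hZlaw : ∀ n j, P.map (Z n j) = μ) (s u : ℝ≥0∞)
    (n : ℕ) :
    ∫⁻ ω, s ^ (∑ k ∈ range (n + 1), galtonWatson Z k ω) * u ^ galtonWatson Z (n + 1) ω ∂P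
      = ∫⁻ ω, s ^ (∑ k ∈ range n, galtonWatson Z k ω) *
          (s * ∫⁻ k, u ^ k ∂μ) ^ galtonWatson Z n ω ∂P := by
  have hpgf : ∀ j, ∫⁻ ω, u ^ Z n j ω ∂P = ∫⁻ k, u ^ k ∂μ := fun j => by
    rw [← hZlaw n j, lintegral_map Measurable.of_discrete (hZm n j)]
  have hH : Measurable[subfamilySigma (Function.uncurry Z) {q | q.1 < n}]
      fun ω => s ^ (∑ k ∈ range n, galtonWatson Z k ω) * s ^ galtonWatson Z n ω :=
    (Measurable.of_discrete.comp (measurable_sum_range_galtonWatson n)).mul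
      (Measurable.of_discrete.comp (measurable_galtonWatson n))
  have hwald := lintegral_mul_pow_sum_range hZ (fun q => hZm q.1 q.2) (e := fun j => (n, j))
    (fun j => lt_irrefl n) (fun _ _ h => congrArg Prod.snd h) hpgf hH (measurable_galtonWatson n)
  simp only [sum_range_succ, pow_add, galtonWatson]
  simpa only [mul_pow, mul_assoc, Function.uncurry_apply_pair] using hwald

lemma lintegral_pow_sum_mul_pow_galtonWatson_le [IsProbabilityMeasure P]
    (hZm : ∀ n j, Measurable (Z n j)) (hZ : iIndepFun (Function.uncurry Z) P)
    (hZlaw : ∀ n j, P.map (Z n j) = μ) {s t : ℝ≥0∞} (hst : s * ∫⁻ k, t ^ k ∂μ ≤ t) (n : ℕ) :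
    ∀ u ≤ t, ∫⁻ ω, s ^ (∑ k ∈ range n, galtonWatson Z k ω) * u ^ galtonWatson Z n ω ∂P ≤ t := by
  induction n with
  | zero => intro u hu; simpa [galtonWatson] using hu
  | succ n ih =>
    intro u hu
    rw [lintegral_pow_sum_mul_pow_galtonWatson_succ hZm hZ hZlaw]
    exact ih _ (le_trans (mul_le_mul_right (lintegral_mono fun k => pow_le_pow_left' hu k) s) hst)

lemma exists_pow_mul_measure_progeny_le [IsProbabilityMeasure P]
    (hZm : ∀ n j, Measurable (Z n j)) (hZ : iIndepFun (Function.uncurry Z) P)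
    (hZlaw : ∀ n j, P.map (Z n j) = μ) {T : ℝ≥0∞} (hT1 : 1 ≤ T) (hT : T ≠ ⊤)
    (hμT : ∫⁻ k, T ^ k ∂μ < T) :
    ∃ r, 1 < r ∧ r ≠ ⊤ ∧ ∀ K : ℕ,
      r ^ (K + 1) * P {ω | (K : ℕ∞) < ∑' n, (galtonWatson Z n ω : ℕ∞)} ≤ T := by
  set F := ∫⁻ k, T ^ k ∂μ
  have hF1 : 1 ≤ F := by
    have : IsProbabilityMeasure μ :=
      hZlaw 0 0 ▸ Measure.isProbabilityMeasure_map (hZm 0 0).aemeasurable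
    calc 1 = ∫⁻ _, 1 ∂μ := by simp
      _ ≤ F := lintegral_mono fun k => one_le_pow₀ hT1
  have hF0 : F ≠ 0 := (one_pos.trans_le hF1).ne'
  have hFtop : F ≠ ⊤ := ne_top_of_lt hμT
  have hr1 : 1 < T / F := (ENNReal.lt_div_iff_mul_lt (Or.inl hF0) (Or.inl hFtop)).mpr
    (by rwa [one_mul])
  have hmoment : ∀ n, ∫⁻ ω, (T / F) ^ (∑ k ∈ range n, galtonWatson Z k ω) ∂P ≤ T := fun n => by
    simpa using lintegral_pow_sum_mul_pow_galtonWatson_le hZm hZ hZlaw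
      (ENNReal.div_mul_cancel hF0 hFtop).le n 1 hT1
  have hmeas : ∀ n, Measurable (galtonWatson Z n) := fun n =>
    (measurable_galtonWatson n).mono
      (subfamilySigma_le (W := Function.uncurry Z) (fun q => hZm q.1 q.2) _) le_rfl
  exact ⟨T / F, hr1, ENNReal.div_ne_top hT hF0,
    pow_mul_measure_lt_tsum_le hmeas hr1.le hmoment⟩

theorem exists_tail_le_galtonWatson [IsProbabilityMeasure P] (hZm : ∀ n j, Measurable (Z n j))
    (hZ : iIndepFun (Function.uncurry Z) P) (hZlaw : ∀ n j, P.map (Z n j) = μ) {t : ℝ}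
    (ht : 1 < t) (hμt : ∫⁻ k, ENNReal.ofReal t ^ k ∂μ < ENNReal.ofReal t) :
    ∃ C s : ℝ, 1 < s ∧ ∀ K : ℕ,
      (P {ω | (K : ℕ∞) < ∑' n, (galtonWatson Z n ω : ℕ∞)}).toReal ≤ C * s ^ (-(K : ℝ)) := by
  obtain ⟨r, hr1, hrtop, hr⟩ := exists_pow_mul_measure_progeny_le hZm hZ hZlaw
    (ENNReal.one_le_ofReal.mpr ht.le) ENNReal.ofReal_ne_top hμt
  have hrr : 1 < r.toReal := by simpa using ENNReal.toReal_strict_mono hrtop hr1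
  refine ⟨t, r.toReal, hrr, fun K => ?_⟩
  set q := (P {ω | (K : ℕ∞) < ∑' n, (galtonWatson Z n ω : ℕ∞)}).toReal
  have htail : r.toReal ^ (K + 1) * q ≤ t := by
    have := ENNReal.toReal_mono ENNReal.ofReal_ne_top (hr K)
    rwa [ENNReal.toReal_mul, ENNReal.toReal_pow, ENNReal.toReal_ofReal (by linarith)] at this
  rw [Real.rpow_neg (by positivity), Real.rpow_natCast, ← div_eq_mul_inv,
    le_div_iff₀ (by positivity)]
  calc q * r.toReal ^ K ≤ r.toReal ^ (K + 1) * q := by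
        rw [mul_comm]; gcongr; exacts [hrr.le, K.le_succ]
    _ ≤ t := htail

end GaltonWatson

section Offspring

variable {Ω : Type*} [MeasurableSpace Ω] {P : Measure Ω}

lemma lintegral_pow_of_le_one [IsProbabilityMeasure P] {B : Ω → ℕ} (hB : Measurable B)
    (hB1 : ∀ ω, B ω ≤ 1) (u : ℝ≥0∞) :
    ∫⁻ ω, u ^ B ω ∂P = u * P {ω | B ω = 1} + (1 - P {ω | B ω = 1}) := by
  have hs : MeasurableSet {ω | B ω = 1} := hB (measurableSet_singleton 1)
  have hsplit : (fun ω => u ^ B ω) = fun ω =>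
      {ω | B ω = 1}.indicator (fun _ => u) ω + {ω | B ω = 1}ᶜ.indicator (fun _ => 1) ω := by
    funext ω
    rcases Nat.le_one_iff_eq_zero_or_eq_one.mp (hB1 ω) with h | h <;> simp [h]
  rw [hsplit, lintegral_add_left (measurable_const.indicator hs), lintegral_indicator_const hs,
    lintegral_indicator_const hs.compl, prob_compl_eq_one_sub hs, one_mul]

lemma lintegral_ofReal_pow_of_geometric {N : Ω → ℕ} (hN : Measurable N) {r c q : ℝ}
    (hr : 0 ≤ r) (hc : 0 ≤ c) (hq : 0 ≤ q) (hrq : r * q < 1)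
    (hNlaw : ∀ i, P {ω | N ω = i} = ENNReal.ofReal (r ^ i * c)) :
    ∫⁻ ω, ENNReal.ofReal q ^ N ω ∂P = ENNReal.ofReal (c * (1 - r * q)⁻¹) := by
  have hrq0 : 0 ≤ r * q := mul_nonneg hr hq
  have hterm : ∀ i, ENNReal.ofReal q ^ i * P {ω | N ω = i} = ENNReal.ofReal (c * (r * q) ^ i) :=
    fun i => by
      rw [hNlaw, ← ENNReal.ofReal_pow hq, ← ENNReal.ofReal_mul (pow_nonneg hq i), mul_pow]
      ring_nf
  rw [← lintegral_map (f := fun i => ENNReal.ofReal q ^ i) Measurable.of_discrete hN,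
    lintegral_countable']
  simp_rw [Measure.map_apply hN (measurableSet_singleton _)]
  change ∑' i, ENNReal.ofReal q ^ i * P {ω | N ω = i} = _
  rw [tsum_congr fun i => hterm i, ← ENNReal.ofReal_tsum_of_nonneg (fun i => by positivity)
    ((summable_geometric_of_lt_one hrq0 hrq).mul_left c), tsum_mul_left,
    tsum_geometric_of_lt_one hrq0 hrq]

lemma lintegral_ofReal_pow_add_of_geometric {N : Ω → ℕ} (hN : Measurable N) {a : ℝ}
    (ha : 0 ≤ a) (hNlaw : ∀ i, P {ω | N ω = i} = ENNReal.ofReal ((a / (a + 1)) ^ i * (1 / (a + 1))))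
    {q : ℝ} (hq : 0 ≤ q) (haq : a * (q - 1) < 1) (m : ℕ) :
    ∫⁻ ω, ENNReal.ofReal q ^ (m + N ω) ∂P = ENNReal.ofReal (q ^ m / (1 - a * (q - 1))) := by
  have hrq : a / (a + 1) * q < 1 := by
    rw [← mul_div_right_comm, div_lt_one (by linarith)]
    linarith
  simp_rw [pow_add]
  rw [lintegral_const_mul' _ _ (ENNReal.pow_ne_top ENNReal.ofReal_ne_top),
    lintegral_ofReal_pow_of_geometric hN (by positivity) (by positivity) hq hrq hNlaw,
    ← ENNReal.ofReal_pow hq, ← ENNReal.ofReal_mul (by positivity)]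
  congr 1
  field_simp
  ring

lemma lintegral_ofReal_pow_sum_range_bernoulli [IsProbabilityMeasure P] {N : Ω → ℕ}
    {B : ℕ → Ω → ℕ} (hN : Measurable N) (hB : ∀ j, Measurable (B j)) (hB1 : ∀ j ω, B j ω ≤ 1)
    (hNB : iIndepFun (fun o : Option ℕ => Option.elim o N B) P) {p : ℝ} (hp0 : 0 ≤ p)
    (hp1 : p ≤ 1) (hBlaw : ∀ j, P {ω | B j ω = 1} = ENNReal.ofReal p) (m : ℕ) {s : ℝ}
    (hs : 0 ≤ s) :
    ∫⁻ ω, ENNReal.ofReal (1 + s) ^ (∑ j ∈ range (m + N ω), B j ω) ∂P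
      = ∫⁻ ω, ENNReal.ofReal (1 + p * s) ^ (m + N ω) ∂P := by
  have hpgf : ∀ j, ∫⁻ ω, ENNReal.ofReal (1 + s) ^ B j ω ∂P = ENNReal.ofReal (1 + p * s) := by
    intro j
    rw [lintegral_pow_of_le_one (hB j) (hB1 j), hBlaw, ← ENNReal.ofReal_mul (by linarith),
      ← ENNReal.ofReal_one, ← ENNReal.ofReal_sub _ hp0, ← ENNReal.ofReal_add (by positivity)
      (by linarith)]
    ring_nf
  have hR : Measurable[subfamilySigma (fun o : Option ℕ => Option.elim o N B) {none}]
      fun ω => m + N ω :=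
    Measurable.of_discrete.comp (measurable_subfamilySigma (Set.mem_singleton none))
  simpa using lintegral_mul_pow_sum_range hNB (by rintro (_ | j); exacts [hN, hB j])
    (e := some) (fun j => by simp) (Option.some_injective ℕ) hpgf (H := fun _ => 1)
    measurable_const hR

end Offspring

lemma one_add_pow_mul_one_sub_le_one {a : ℝ} (ha0 : 0 ≤ a) (ha1 : a ≤ 1) (m : ℕ) :
    (1 + a) ^ m * (1 - m * a) ≤ 1 :=
  calc (1 + a) ^ m * (1 - m * a) ≤ (1 + a) ^ m * (1 - a) ^ m := by
        gcongr
        simpa [sub_eq_add_neg] using one_add_mul_le_pow (a := -a) (by linarith) m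
    _ = (1 - a ^ 2) ^ m := by rw [← mul_pow]; ring
    _ ≤ 1 := pow_le_one₀ (by nlinarith) (by nlinarith)

/- With `c = m p`, `one_add_pow_mul_one_sub_le_one` gives `(1 + p s)^m ≤ 1 / (1 - c s)`, while
`(1 + s) (1 - c s)^2 ≥ 1 + s (1 - 2c - 2cs) > 1` as soon as `2cs < 1 - 2c`. -/
lemma exists_one_add_pow_lt {m : ℕ} {p : ℝ} (hp0 : 0 ≤ p) (hp1 : p ≤ 1) (hmp : 2 * m * p < 1) :
    ∃ s > 0, m * (p * s) < 1 ∧ (1 + p * s) ^ m < (1 + s) * (1 - m * (p * s)) := by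
  set c := m * p with hc_def
  have hc : 0 ≤ c := by positivity
  set s := (1 - 2 * c) / (4 * c + 1)
  have hs : 0 < s := div_pos (by linarith) (by linarith)
  have hs1 : s ≤ 1 := (div_le_one (by linarith)).mpr (by linarith)
  have h2cs : 2 * c * s < 1 - 2 * c := by
    rw [mul_div_assoc', div_lt_iff₀ (by linarith)]
    nlinarith
  have hmps : m * (p * s) = c * s := by rw [hc_def]; ring
  have hbound := one_add_pow_mul_one_sub_le_one (mul_nonneg hp0 hs.le)
    (mul_le_one₀ hp1 hs.le hs1) m
  rw [hmps] at hbound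
  have hcs : 0 < 1 - c * s := by linarith
  have hgrowth : 1 < (1 + s) * (1 - 2 * c * s) := by
    nlinarith [mul_pos hs (show 0 < 1 - 2 * c - 2 * c * s by linarith)]
  refine ⟨s, hs, by linarith, ?_⟩
  rw [hmps]
  refine lt_of_mul_lt_mul_right ?_ hcs.le
  calc (1 + p * s) ^ m * (1 - c * s) ≤ 1 := hbound
    _ < (1 + s) * (1 - c * s) * (1 - c * s) := by nlinarith [sq_nonneg (c * s)]

lemma four_mul_mul_div_add_one_lt_one {d γ : ℝ} (hγ0 : 0 < γ) (hγ : γ < 1 / (4 * d - 1)) :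
    4 * d * (γ / (γ + 1)) < 1 := by
  have hd : 0 < 4 * d - 1 := by
    by_contra! h
    linarith [one_div_nonpos.mpr h]
  rw [lt_div_iff₀ hd] at hγ
  rw [← mul_div_assoc, div_lt_one (by linarith)]
  linarith

theorem progeny_exponential_decay_general
    {Ω : Type*} [MeasurableSpace Ω] (P : Measure Ω) [IsProbabilityMeasure P]
    (d : ℕ) (γ : ℝ) (hγ0 : 0 < γ) (hγ : γ < 1 / (4 * d - 1))
    (N : Ω → ℕ) (hNmeas : Measurable N)
    (hN : ∀ i : ℕ, P {ω | N ω = i} =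
      ENNReal.ofReal ((2 * d / (2 * d + 1) : ℝ) ^ i * (1 / (2 * d + 1))))
    (B : ℕ → Ω → ℕ) (hBmeas : ∀ j, Measurable (B j))
    (hBval : ∀ j ω, B j ω ≤ 1)
    (hB : ∀ j, P {ω | B j ω = 1} = ENNReal.ofReal (γ / (γ + 1)))
    (hindepNB : iIndepFun
      (fun o : Option ℕ => Option.elim o N B) P)
    -- `Z n j` are i.i.d. copies of `Y = ∑_{j < 2d+N} B j`
    (Z : ℕ → ℕ → Ω → ℕ) (hZmeas : ∀ n j, Measurable (Z n j))
    (hZindep : iIndepFun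
      (fun p : ℕ × ℕ => Z p.1 p.2) P)
    (hZdist : ∀ n j, Measure.map (Z n j) P
      = Measure.map (fun ω => ∑ j ∈ Finset.range (2 * d + N ω), B j ω) P)
    -- the Galton–Watson process and its total progeny
    (X : ℕ → Ω → ℕ) (hX0 : ∀ ω, X 0 ω = 1)
    (hXsucc : ∀ n ω, X (n + 1) ω = ∑ j ∈ Finset.range (X n ω), Z n j ω)
    (π : Ω → ℕ∞) (hπ : ∀ ω, π ω = ∑' n, (X n ω : ℕ∞)) :
    ∃ (C₁ : ℝ) (s₁ : ℝ), 1 < s₁ ∧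
      ∀ K : ℕ, (P {ω | (K : ℕ∞) < π ω}).toReal ≤ C₁ * s₁ ^ (-(K : ℝ)) := by
  set p := γ / (γ + 1)
  have hp0 : 0 ≤ p := by positivity
  have hp1 : p ≤ 1 := div_le_one_of_le₀ (by linarith) (by linarith)
  obtain ⟨s, hs, hsp, hslt⟩ := exists_one_add_pow_lt (m := 2 * d) hp0 hp1
    (by push_cast; linarith [four_mul_mul_div_add_one_lt_one hγ0 hγ])
  push_cast at hsp hslt
  obtain rfl := eq_galtonWatson hX0 hXsucc
  obtain rfl : π = fun ω => ∑' n, (galtonWatson Z n ω : ℕ∞) := funext hπ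
  refine exists_tail_le_galtonWatson hZmeas hZindep hZdist (t := 1 + s) (by linarith) ?_
  rw [lintegral_map Measurable.of_discrete
      (measurable_sum_range_of_measurable (hNmeas.const_add _) hBmeas),
    lintegral_ofReal_pow_sum_range_bernoulli hNmeas hBmeas hBval hindepNB hp0 hp1 hB _ hs.le,
    lintegral_ofReal_pow_add_of_geometric hNmeas (by positivity) hN (by positivity)
      (by rw [add_sub_cancel_left]; exact hsp),
    ENNReal.ofReal_lt_ofReal_iff (by linarith), add_sub_cancel_left, div_lt_iff₀ (by linarith)]
  exact hslt

/-- Let `0 < γ < 1/(4d−1)`, let `Y` be the compound offspring variable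
built from a shifted geometric `N` and i.i.d. Bernoulli(`γ/(γ+1)`) variables `(B j)`
independent of `N`, and let `(Z n j)` be i.i.d. copies of `Y` driving the Galton–Watson
process `X 0 = 1`, `X (n+1) = ∑_{j < X n} Z n j`, with total progeny `π = ∑ₙ X n ∈ ℕ∞`.
Then there exist `C₁ < ∞` and `s₁ > 1` with `P(π > K) ≤ C₁ s₁^{−K}` for all `K ∈ ℕ`. -/
theorem progeny_exponential_decay
    {Ω : Type*} [MeasurableSpace Ω] (P : Measure Ω) [IsProbabilityMeasure P]
    (d : ℕ) (hd : 1 ≤ d) (γ : ℝ) (hγ0 : 0 < γ) (hγ : γ < 1 / (4 * d - 1))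
    (N : Ω → ℕ) (hNmeas : Measurable N)
    (hN : ∀ i : ℕ, P {ω | N ω = i} =
      ENNReal.ofReal ((2 * d / (2 * d + 1) : ℝ) ^ i * (1 / (2 * d + 1))))
    (B : ℕ → Ω → ℕ) (hBmeas : ∀ j, Measurable (B j))
    (hBval : ∀ j ω, B j ω ≤ 1)
    (hB : ∀ j, P {ω | B j ω = 1} = ENNReal.ofReal (γ / (γ + 1)))
    (hindepNB : iIndepFun
      (fun o : Option ℕ => Option.elim o N B) P)
    -- `Z n j` are i.i.d. copies of `Y = ∑_{j < 2d+N} B j`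
    (Z : ℕ → ℕ → Ω → ℕ) (hZmeas : ∀ n j, Measurable (Z n j))
    (hZindep : iIndepFun
      (fun p : ℕ × ℕ => Z p.1 p.2) P)
    (hZdist : ∀ n j, Measure.map (Z n j) P
      = Measure.map (fun ω => ∑ j ∈ Finset.range (2 * d + N ω), B j ω) P)
    -- the Galton–Watson process and its total progeny
    (X : ℕ → Ω → ℕ) (hX0 : ∀ ω, X 0 ω = 1)
    (hXsucc : ∀ n ω, X (n + 1) ω = ∑ j ∈ Finset.range (X n ω), Z n j ω)
    (π : Ω → ℕ∞) (hπ : ∀ ω, π ω = ∑' n, (X n ω : ℕ∞)) :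
    ∃ (C₁ : ℝ) (s₁ : ℝ), 1 < s₁ ∧
      ∀ K : ℕ, (P {ω | (K : ℕ∞) < π ω}).toReal ≤ C₁ * s₁ ^ (-(K : ℝ)) :=
  progeny_exponential_decay_general P d γ hγ0 hγ N hNmeas hN B hBmeas hBval hB hindepNB Z hZmeas
    hZindep hZdist X hX0 hXsucc π hπ
end

section
/- Let ξ be an ℕ-valued random variable, let (ξ^{(n)}_j)_{n≥0, j≥1} be i.i.d. copies of ξ on a probability space, define the Galton–Watson process X_0 = 1 and X_{n+1} = ∑_{j=1}^{X_n} ξ^{(n)}_j, and let π = ∑_{n≥0} X_n ∈ ℕ ∪ {∞} be its total progeny. Then for every s ∈ [0,1), the generating function F(s) := E(s^π · 1{π < ∞}) satisfies the functional equation F(s) = s · G(F(s)), where G(t) = E(t^ξ) is the probability-generating function of the offspring distribution. -/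
/-!
Let `G` be the offspring pgf and `Φ u = s * G u`. Given the first `n` generations, `X (n + 1)` is a
sum of `X n` fresh independent copies of `ξ`, so `E[W t ^ X (n + 1)] = E[W G(t) ^ X n]` for every
integrable `W` determined by those generations. Peeling off one generation at a time gives
`E[s ^ (X 0 + ⋯ + X (n - 1)) t ^ X n] = Φ^[n] t`, so `Φ^[n] s = E[s ^ (X 0 + ⋯ + X n)]`, which tends
to `F(s)` by dominated convergence. Since `Φ` is continuous at `F(s) ∈ [0, s]`, `F(s)` is a fixed
point of `Φ`.
-/

open MeasureTheory ProbabilityTheory Filter Topology Set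

lemma ENat.tendsto_sum_range_tsum (f : ℕ → ℕ∞) :
    Tendsto (fun n => ∑ i ∈ Finset.range n, f i) atTop (𝓝 (∑' i, f i)) :=
  (hasSum_of_isLUB _ isLUB_iSup).summable.hasSum.tendsto_sum_nat

lemma tendsto_pow_of_tendsto_natCast {s : ℝ} (hs0 : 0 ≤ s) (hs1 : s < 1) {u : ℕ → ℕ} {a : ℕ∞}
    (hu : Tendsto (fun n => (u n : ℕ∞)) atTop (𝓝 a)) :
    Tendsto (fun n => s ^ u n) atTop (𝓝 (if a = ⊤ then 0 else s ^ a.toNat)) := by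
  rcases eq_or_ne a ⊤ with rfl | ha
  · have hu_top : Tendsto u atTop atTop := tendsto_atTop.2 fun b =>
      (ENat.tendsto_nhds_top_iff_natCast_lt.1 hu b).mono fun n hn => (Nat.cast_lt.1 hn).le
    rw [if_pos rfl]
    exact (tendsto_pow_atTop_nhds_zero_of_lt_one hs0 hs1).comp hu_top
  · rw [ENat.nhds_eq_pure ha, tendsto_pure] at hu
    rw [if_neg ha]
    exact tendsto_const_nhds.congr' (hu.mono fun n hn => by simp [← hn])

lemma measurable_apply_of_countable_index {α ι β : Type*} {mα : MeasurableSpace α}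
    [MeasurableSpace ι] [Countable ι] [MeasurableSingletonClass ι] [MeasurableSpace β]
    {g : ι → α → β} (hg : ∀ i, Measurable (g i)) {N : α → ι} (hN : Measurable N) :
    Measurable fun a => g (N a) a :=
  (measurable_from_prod_countable_right (f := fun p : ι × α => g p.1 p.2) hg).comp
    (hN.prodMk measurable_id)

section FamilySigma

variable {Ω ι β : Type*} [mβ : MeasurableSpace β] {Z : ι → Ω → β}

abbrev familySigma (Z : ι → Ω → β) (S : Set ι) : MeasurableSpace Ω :=
  ⨆ i ∈ S, mβ.comap (Z i)

lemma familySigma_le {mΩ : MeasurableSpace Ω} (hZ : ∀ i, Measurable (Z i)) (S : Set ι) :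
    familySigma Z S ≤ mΩ :=
  iSup₂_le fun i _ => (hZ i).comap_le

lemma familySigma_mono {S T : Set ι} (h : S ⊆ T) : familySigma Z S ≤ familySigma Z T :=
  biSup_mono h

lemma measurable_familySigma {S : Set ι} {i : ι} (hi : i ∈ S) :
    Measurable[familySigma Z S] (Z i) :=
  measurable_iff_comap_le.2 (le_iSup₂ (f := fun i (_ : i ∈ S) => mβ.comap (Z i)) i hi)

lemma ProbabilityTheory.iIndepFun.indep_familySigma {mΩ : MeasurableSpace Ω} {P : Measure Ω}
    (h : iIndepFun Z P) (hZ : ∀ i, Measurable (Z i)) {S T : Set ι} (hST : Disjoint S T) :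
    Indep (familySigma Z S) (familySigma Z T) P :=
  indep_iSup_of_disjoint (fun i => (hZ i).comap_le) h.iIndep hST

end FamilySigma

lemma ProbabilityTheory.Indep.indepFun_of_measurable {Ω β γ : Type*} [MeasurableSpace β]
    [MeasurableSpace γ] {m₁ m₂ _mΩ : MeasurableSpace Ω} {P : Measure Ω} (h : Indep m₁ m₂ P)
    {f : Ω → β} {g : Ω → γ} (hf : Measurable[m₁] f) (hg : Measurable[m₂] g) : IndepFun f g P :=
  (IndepFun_iff_Indep f g P).2
    (indep_of_indep_of_le_right (indep_of_indep_of_le_left h hf.comap_le) hg.comap_le)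

section Freezing

variable {Ω ι E : Type*} [MeasurableSpace ι] [Countable ι] [MeasurableSingletonClass ι]

lemma integral_eq_tsum_setIntegral_fiber {mΩ : MeasurableSpace Ω} {P : Measure Ω}
    [NormedAddCommGroup E] [NormedSpace ℝ E]
    {N : Ω → ι} (hN : Measurable N) {f : Ω → E} (hf : Integrable f P) :
    ∫ ω, f ω ∂P = ∑' i, ∫ ω in N ⁻¹' {i}, f ω ∂P := by
  rw [← integral_iUnion (fun i => hN (measurableSet_singleton i)) (pairwise_disjoint_fiber N)
    hf.integrableOn, ← preimage_iUnion, iUnion_of_singleton, preimage_univ, setIntegral_univ]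

lemma integral_mul_apply_index_of_indep {m₁ m₂ mΩ : MeasurableSpace Ω} {P : Measure Ω}
    [IsProbabilityMeasure P] (h₁ : m₁ ≤ mΩ) (h₂ : m₂ ≤ mΩ) (hindep : Indep m₁ m₂ P)
    {N : Ω → ι} (hN : Measurable[m₁] N)
    {W : Ω → ℝ} (hW : Measurable[m₁] W) (hWint : Integrable W P)
    {V : ι → Ω → ℝ} (hV : ∀ i, Measurable[m₂] (V i)) {C : ℝ} (hVC : ∀ i ω, ‖V i ω‖ ≤ C) :
    ∫ ω, W ω * V (N ω) ω ∂P = ∫ ω, W ω * ∫ ω', V (N ω) ω' ∂P ∂P := by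
  have hN' : Measurable N := hN.mono h₁ le_rfl
  have hW' : Measurable W := hW.mono h₁ le_rfl
  have hV' : ∀ i, Measurable (V i) := fun i => (hV i).mono h₂ le_rfl
  have hint_left : Integrable (fun ω => W ω * V (N ω) ω) P :=
    hWint.mul_bdd (measurable_apply_of_countable_index hV' hN').aestronglyMeasurable
      (Eventually.of_forall fun ω => hVC _ ω)
  have hint_right : Integrable (fun ω => W ω * ∫ ω', V (N ω) ω' ∂P) P := by
    refine hWint.mul_bdd (c := C)
      ((measurable_of_countable fun i => ∫ ω', V i ω' ∂P).comp hN').aestronglyMeasurable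
      (Eventually.of_forall fun ω => ?_)
    simpa using norm_integral_le_of_norm_le_const (μ := P) (Eventually.of_forall (hVC (N ω)))
  rw [integral_eq_tsum_setIntegral_fiber hN' hint_left,
    integral_eq_tsum_setIntegral_fiber hN' hint_right]
  refine tsum_congr fun i => ?_
  have hfiber : MeasurableSet (N ⁻¹' {i}) := hN' (measurableSet_singleton i)
  have hsetIntegral_mul (g : Ω → ℝ) :
      ∫ ω in N ⁻¹' {i}, W ω * g ω ∂P = ∫ ω, (N ⁻¹' {i}).indicator W ω * g ω ∂P := by
    rw [← integral_indicator hfiber]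
    simp_rw [indicator_mul_left]
  have hindep_fiber : IndepFun ((N ⁻¹' {i}).indicator W) (V i) P :=
    hindep.indepFun_of_measurable (hW.indicator (hN (measurableSet_singleton i))) (hV i)
  calc ∫ ω in N ⁻¹' {i}, W ω * V (N ω) ω ∂P
      = ∫ ω in N ⁻¹' {i}, W ω * V i ω ∂P :=
        setIntegral_congr_fun hfiber fun ω (hω : N ω = i) => by rw [hω]
    _ = (∫ ω, (N ⁻¹' {i}).indicator W ω ∂P) * ∫ ω, V i ω ∂P := by
        rw [hsetIntegral_mul]
        exact hindep_fiber.integral_fun_mul_eq_mul_integral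
          (hW'.indicator hfiber).aestronglyMeasurable (hV' i).aestronglyMeasurable
    _ = ∫ ω in N ⁻¹' {i}, W ω * ∫ ω', V i ω' ∂P ∂P := by
        rw [hsetIntegral_mul, integral_mul_const]
    _ = ∫ ω in N ⁻¹' {i}, W ω * ∫ ω', V (N ω) ω' ∂P ∂P :=
        setIntegral_congr_fun hfiber fun ω (hω : N ω = i) => by rw [hω]

end Freezing

section Pgf

variable {Ω : Type*} {mΩ : MeasurableSpace Ω} {P : Measure Ω} {ξ : Ω → ℕ}

noncomputable def pgf (P : Measure Ω) (ξ : Ω → ℕ) (t : ℝ) : ℝ := ∫ ω, t ^ ξ ω ∂P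

lemma pgf_nonneg {t : ℝ} (ht : 0 ≤ t) : 0 ≤ pgf P ξ t :=
  integral_nonneg fun _ => pow_nonneg ht _

lemma abs_pgf_le_one [IsProbabilityMeasure P] {t : ℝ} (ht : |t| ≤ 1) : |pgf P ξ t| ≤ 1 := by
  simpa [pgf] using norm_integral_le_of_norm_le_const (μ := P) (f := fun ω => t ^ ξ ω) (C := 1)
    (Eventually.of_forall fun ω => by simpa using pow_le_one₀ (abs_nonneg t) ht)

lemma continuousOn_pgf [IsFiniteMeasure P] (hξ : AEMeasurable ξ P) :
    ContinuousOn (pgf P ξ) (Icc (-1) 1) := by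
  refine continuousOn_of_dominated (bound := fun _ => 1)
    (fun t _ => (measurable_from_nat.comp_aemeasurable hξ).aestronglyMeasurable)
    (fun t ht => Eventually.of_forall fun ω => ?_) (integrable_const 1)
    (Eventually.of_forall fun ω => (continuous_pow (ξ ω)).continuousOn)
  simpa using pow_le_one₀ (abs_nonneg t) (abs_le.2 ht)

lemma mapsTo_mul_pgf [IsProbabilityMeasure P] {s : ℝ} (hs : 0 ≤ s) :
    MapsTo (fun u => s * pgf P ξ u) (Icc 0 1) (Icc 0 s) := fun u hu =>
  ⟨mul_nonneg hs (pgf_nonneg hu.1), mul_le_of_le_one_right hs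
    ((le_abs_self _).trans (abs_pgf_le_one (abs_le.2 ⟨by linarith [hu.1], hu.2⟩)))⟩

lemma ProbabilityTheory.IdentDistrib.pgf_eq {Y : Ω → ℕ} (h : IdentDistrib Y ξ P P) (t : ℝ) :
    pgf P Y t = pgf P ξ t :=
  (h.comp (measurable_from_nat (f := fun k : ℕ => t ^ k))).integral_eq

lemma ProbabilityTheory.iIndepFun.integral_pow_sum_range {Y : ℕ → Ω → ℕ} (hind : iIndepFun Y P)
    (hY : ∀ j, IdentDistrib (Y j) ξ P P) (t : ℝ) (k : ℕ) :
    ∫ ω, t ^ ∑ j ∈ Finset.range k, Y j ω ∂P = pgf P ξ t ^ k := by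
  calc ∫ ω, t ^ ∑ j ∈ Finset.range k, Y j ω ∂P
      = ∫ ω, ∏ j : Fin k, t ^ Y j ω ∂P := by
        simp_rw [← Finset.prod_pow_eq_pow_sum, Finset.prod_range]
    _ = ∏ j : Fin k, pgf P (Y j) t :=
        (hind.precomp Fin.val_injective).integral_fun_prod_comp (f := fun _ j => t ^ j)
          (fun j => (hY j).aemeasurable_fst) (fun _ => measurable_from_nat.aestronglyMeasurable)
    _ = pgf P ξ t ^ k := by simp [(hY _).pgf_eq]

end Pgf

lemma tendsto_integral_pow_sum_range {Ω : Type*} {mΩ : MeasurableSpace Ω} {P : Measure Ω}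
    [IsFiniteMeasure P] {X : ℕ → Ω → ℕ} (hX : ∀ n, Measurable (X n)) {s : ℝ} (hs0 : 0 ≤ s)
    (hs1 : s < 1) :
    Tendsto (fun n => ∫ ω, s ^ ∑ k ∈ Finset.range n, X k ω ∂P) atTop
      (𝓝 (∫ ω, (if ∑' k, (X k ω : ℕ∞) = ⊤ then 0 else s ^ (∑' k, (X k ω : ℕ∞)).toNat) ∂P)) := by
  refine tendsto_integral_of_dominated_convergence (fun _ => 1)
    (fun n => (measurable_from_nat.comp
      (Finset.measurable_sum _ fun k _ => hX k)).aestronglyMeasurable)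
    (integrable_const 1) (fun n => Eventually.of_forall fun ω => ?_)
    (Eventually.of_forall fun ω => tendsto_pow_of_tendsto_natCast hs0 hs1 ?_)
  · simpa [abs_of_nonneg hs0] using pow_le_one₀ hs0 hs1.le
  · simpa using ENat.tendsto_sum_range_tsum fun k => (X k ω : ℕ∞)

structure IsGaltonWatson {Ω : Type*} [MeasurableSpace Ω] (P : Measure Ω) (ξ : Ω → ℕ)
    (Z : ℕ → ℕ → Ω → ℕ) (X : ℕ → Ω → ℕ) : Prop where
  measurable_offspring : ∀ p, Measurable (Function.uncurry Z p)
  iIndepFun_offspring : iIndepFun (Function.uncurry Z) P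
  identDistrib_offspring : ∀ n j, IdentDistrib (Z n j) ξ P P
  generation_zero : ∀ ω, X 0 ω = 1
  generation_succ : ∀ n ω, X (n + 1) ω = ∑ j ∈ Finset.range (X n ω), Z n j ω

namespace IsGaltonWatson

variable {Ω : Type*} [MeasurableSpace Ω] {P : Measure Ω} {ξ : Ω → ℕ} {Z : ℕ → ℕ → Ω → ℕ}
  {X : ℕ → Ω → ℕ}

lemma measurable_generation (h : IsGaltonWatson P ξ Z X) (n : ℕ) :
    Measurable[familySigma (Function.uncurry Z) {p | p.1 < n}] (X n) := by
  induction n with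
  | zero => simp [funext h.generation_zero]
  | succ n ih =>
    rw [funext (h.generation_succ n)]
    refine measurable_apply_of_countable_index (g := fun k ω => ∑ j ∈ Finset.range k, Z n j ω)
      (fun k => Finset.measurable_sum _ fun j _ => ?_)
      (ih.mono (familySigma_mono fun p hp => Nat.lt_succ_of_lt hp) le_rfl)
    exact measurable_familySigma (Z := Function.uncurry Z) (i := (n, j)) n.lt_succ_self

lemma measurable (h : IsGaltonWatson P ξ Z X) (n : ℕ) : Measurable (X n) :=
  (h.measurable_generation n).mono (familySigma_le h.measurable_offspring _) le_rfl

lemma integral_mul_pow_generation_succ [IsProbabilityMeasure P] (h : IsGaltonWatson P ξ Z X)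
    (n : ℕ) {W : Ω → ℝ} (hW : Measurable[familySigma (Function.uncurry Z) {p | p.1 < n}] W)
    (hWint : Integrable W P) {t : ℝ} (ht : |t| ≤ 1) :
    ∫ ω, W ω * t ^ X (n + 1) ω ∂P = ∫ ω, W ω * pgf P ξ t ^ X n ω ∂P := by
  have hdisj : Disjoint {p : ℕ × ℕ | p.1 < n} {p | p.1 = n} :=
    disjoint_left.2 fun _ hlt heq => hlt.ne heq
  have hV (k : ℕ) : Measurable[familySigma (Function.uncurry Z) {p | p.1 = n}]
      (fun ω => t ^ ∑ j ∈ Finset.range k, Z n j ω) :=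
    measurable_from_nat.comp (Finset.measurable_sum _ fun j _ =>
      measurable_familySigma (Z := Function.uncurry Z) (i := (n, j)) rfl)
  simp_rw [h.generation_succ]
  rw [integral_mul_apply_index_of_indep (familySigma_le h.measurable_offspring _)
    (familySigma_le h.measurable_offspring _)
    (h.iIndepFun_offspring.indep_familySigma h.measurable_offspring hdisj)
    (h.measurable_generation n) hW hWint hV (C := 1) fun k ω => ?_]
  · have hrow : iIndepFun (Z n) P :=
      h.iIndepFun_offspring.precomp (g := Prod.mk n) (Prod.mk_right_injective n)
    simp_rw [hrow.integral_pow_sum_range (h.identDistrib_offspring n)]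
  · simpa using pow_le_one₀ (abs_nonneg t) ht

lemma integral_pow_sum_mul_pow_eq_iterate [IsProbabilityMeasure P] (h : IsGaltonWatson P ξ Z X)
    {s : ℝ} (hs : s ∈ Icc 0 1) (n : ℕ) {t : ℝ} (ht : t ∈ Icc 0 1) :
    ∫ ω, s ^ (∑ k ∈ Finset.range n, X k ω) * t ^ X n ω ∂P = (fun u => s * pgf P ξ u)^[n] t := by
  induction n generalizing t with
  | zero => simp [h.generation_zero]
  | succ n ih =>
    have hW : Measurable[familySigma (Function.uncurry Z) {p | p.1 < n}]
        (fun ω => s ^ ∑ k ∈ Finset.range (n + 1), X k ω) :=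
      measurable_from_nat.comp (Finset.measurable_sum _ fun k hk =>
        (h.measurable_generation k).mono (familySigma_mono fun p hp =>
          hp.trans_le (Nat.lt_succ_iff.1 (Finset.mem_range.1 hk))) le_rfl)
    have hWint : Integrable (fun ω => s ^ ∑ k ∈ Finset.range (n + 1), X k ω) P :=
      .of_bound (hW.mono (familySigma_le h.measurable_offspring _) le_rfl).aestronglyMeasurable 1
        (Eventually.of_forall fun ω => by simpa [abs_of_nonneg hs.1] using pow_le_one₀ hs.1 hs.2)
    calc ∫ ω, s ^ (∑ k ∈ Finset.range (n + 1), X k ω) * t ^ X (n + 1) ω ∂P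
        = ∫ ω, s ^ (∑ k ∈ Finset.range (n + 1), X k ω) * pgf P ξ t ^ X n ω ∂P :=
          h.integral_mul_pow_generation_succ n hW hWint (abs_le.2 ⟨by linarith [ht.1], ht.2⟩)
      _ = ∫ ω, s ^ (∑ k ∈ Finset.range n, X k ω) * (s * pgf P ξ t) ^ X n ω ∂P := by
          simp_rw [Finset.sum_range_succ, pow_add, mul_pow, mul_assoc]
      _ = (fun u => s * pgf P ξ u)^[n + 1] t :=
          ih (Icc_subset_Icc_right hs.2 (mapsTo_mul_pgf hs.1 ht))

end IsGaltonWatson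

/-- For a Galton–Watson process with ℕ-valued offspring `ξ`, driven
by i.i.d. copies `(Z n j)` of `ξ`, with `X 0 = 1`, `X (n+1) = ∑_{j < X n} Z n j`, and
total progeny `π = ∑ₙ X n ∈ ℕ∞`, for every `s ∈ [0,1)` the generating function
`F(s) := E(s^π · 1{π < ∞})` satisfies `F(s) = s · G(F(s))` where `G(t) = E(t^ξ)`. -/
theorem progeny_pgf_functional_equation
    {Ω : Type*} [MeasurableSpace Ω] (P : Measure Ω) [IsProbabilityMeasure P]
    (ξ : Ω → ℕ) (hξmeas : Measurable ξ)
    (Z : ℕ → ℕ → Ω → ℕ) (hZmeas : ∀ n j, Measurable (Z n j))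
    (hZindep : iIndepFun
      (fun p : ℕ × ℕ => Z p.1 p.2) P)
    (hZdist : ∀ n j, Measure.map (Z n j) P = Measure.map ξ P)
    (X : ℕ → Ω → ℕ) (hX0 : ∀ ω, X 0 ω = 1)
    (hXsucc : ∀ n ω, X (n + 1) ω = ∑ j ∈ Finset.range (X n ω), Z n j ω)
    (π : Ω → ℕ∞) (hπ : ∀ ω, π ω = ∑' n, (X n ω : ℕ∞))
    (s : ℝ) (hs0 : 0 ≤ s) (hs1 : s < 1) :
    (∫ ω, (if π ω = ⊤ then (0 : ℝ) else s ^ (π ω).toNat) ∂P)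
      = s * ∫ ω,
          (∫ ω', (if π ω' = ⊤ then (0 : ℝ) else s ^ (π ω').toNat) ∂P) ^ (ξ ω) ∂P := by
  have hGW : IsGaltonWatson P ξ Z X := ⟨fun p => hZmeas p.1 p.2, hZindep,
    fun n j => ⟨(hZmeas n j).aemeasurable, hξmeas.aemeasurable, hZdist n j⟩, hX0, hXsucc⟩
  set Φ : ℝ → ℝ := fun u => s * pgf P ξ u
  set L := ∫ ω, (if π ω = ⊤ then (0 : ℝ) else s ^ (π ω).toNat) ∂P with hL_def
  have hs : s ∈ Icc 0 1 := ⟨hs0, hs1.le⟩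
  have hiterate (n : ℕ) : Φ^[n] s = ∫ ω, s ^ ∑ k ∈ Finset.range (n + 1), X k ω ∂P := by
    rw [← hGW.integral_pow_sum_mul_pow_eq_iterate hs n hs]
    simp_rw [Finset.sum_range_succ, pow_add]
  have hlim : Tendsto (fun n => Φ^[n] s) atTop (𝓝 L) := by
    simp_rw [hiterate, hL_def, hπ]
    exact (tendsto_integral_pow_sum_range hGW.measurable hs0 hs1).comp (tendsto_add_atTop_nat 1)
  have hL : L ∈ Icc 0 s := isClosed_Icc.mem_of_tendsto hlim (Eventually.of_forall fun n =>
    ((mapsTo_mul_pgf hs0).mono_left (Icc_subset_Icc_right hs1.le)).iterate n ⟨hs0, le_rfl⟩)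
  have hcont : ContinuousAt Φ L :=
    (continuousOn_const.mul (continuousOn_pgf hξmeas.aemeasurable)).continuousAt
      (Icc_mem_nhds (by linarith [hL.1]) (by linarith [hL.2]))
  exact (isFixedPt_of_tendsto_iterate hlim hcont).symm
end

section
/- For every integer d ≥ 1, (1/2)(1 + 1/(4d))^{4d} ≥ 1 + (1/4)(1 − 1/(4d)) > 1. In particular, setting φ(s) = (1 + 2d(1−s)) s^{4d} and s_0 = 1 + 1/(4d), one has φ(s_0) ≥ 1 + (1/4)(1 − 1/(4d)) > 1. -/
/-!
Truncating the binomial expansion of `(1 + 1/n)^n` after its quadratic term gives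
`(1 + 1/n)^n ≥ 1 + 1 + (n - 1)/(2n) = 5/2 - 1/(2n)`; for `n = 4d` half of this is exactly
`1 + (1/4)(1 - 1/(4d))`. At `s₀ = 1 + 1/(4d)` the prefactor `1 + 2d(1 - s₀)` of `φ` equals
`1/2`, so `φ(s₀)` is the same quantity.
-/

theorem one_add_mul_add_choose_two_mul_sq_le_pow {R : Type*} [CommSemiring R] [PartialOrder R]
    [IsOrderedRing R] {x : R} (hx : 0 ≤ x) (n : ℕ) :
    1 + n * x + n.choose 2 * x ^ 2 ≤ (1 + x) ^ n := by
  induction n with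
  | zero => simp
  | succ n ih =>
    calc 1 + (n + 1 : ℕ) * x + (n + 1).choose 2 * x ^ 2
        ≤ 1 + (n + 1 : ℕ) * x + (n + 1).choose 2 * x ^ 2 + n.choose 2 * x ^ 3 :=
          le_add_of_nonneg_right (by positivity)
      _ = (1 + n * x + n.choose 2 * x ^ 2) * (1 + x) := by
          rw [Nat.choose_succ_succ', Nat.choose_one_right]; push_cast; ring
      _ ≤ (1 + x) ^ n * (1 + x) := mul_le_mul_of_nonneg_right ih (add_nonneg zero_le_one hx)
      _ = (1 + x) ^ (n + 1) := (pow_succ _ _).symm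

theorem five_halves_sub_le_one_add_inv_pow {n : ℕ} (hn : 1 ≤ n) :
    5 / 2 - 1 / (2 * n) ≤ (1 + 1 / n : ℝ) ^ n := by
  have hn' : (0 : ℝ) < n := by exact_mod_cast hn
  calc 5 / 2 - 1 / (2 * n) = 1 + n * (1 / n) + n.choose 2 * (1 / n : ℝ) ^ 2 := by
        rw [Nat.cast_choose_two]; field_simp; ring
    _ ≤ (1 + 1 / n : ℝ) ^ n := one_add_mul_add_choose_two_mul_sq_le_pow (by positivity) n

/-- For every integer `d ≥ 1`,
`(1/2)(1 + 1/(4d))^{4d} ≥ 1 + (1/4)(1 − 1/(4d)) > 1`; in particular, with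
`φ(s) = (1 + 2d(1−s)) s^{4d}` and `s₀ = 1 + 1/(4d)`, one has
`φ(s₀) ≥ 1 + (1/4)(1 − 1/(4d)) > 1`. -/
theorem phi_estimate (d : ℕ) (hd : 1 ≤ d) :
    ((1 / 2 : ℝ) * (1 + 1 / (4 * d)) ^ (4 * d) ≥ 1 + (1 / 4) * (1 - 1 / (4 * d)) ∧
      (1 : ℝ) < 1 + (1 / 4) * (1 - 1 / (4 * d))) ∧
    ((fun s : ℝ => (1 + 2 * d * (1 - s)) * s ^ (4 * d)) (1 + 1 / (4 * d))
        ≥ 1 + (1 / 4) * (1 - 1 / (4 * d)) ∧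
      (1 : ℝ) < 1 + (1 / 4) * (1 - 1 / (4 * d))) := by
  have hd' : (1 : ℝ) ≤ d := by exact_mod_cast hd
  have hbound :
      1 + (1 / 4) * (1 - 1 / (4 * d)) ≤ (1 / 2 : ℝ) * (1 + 1 / (4 * d)) ^ (4 * d) := by
    have h := five_halves_sub_le_one_add_inv_pow (n := 4 * d) (by omega)
    push_cast at h
    have hrhs : 1 + (1 / 4) * (1 - 1 / (4 * d)) = (1 / 2 : ℝ) * (5 / 2 - 1 / (2 * (4 * d))) := by
      field_simp; ring
    rw [hrhs]; gcongr
  have hgt : (1 : ℝ) < 1 + (1 / 4) * (1 - 1 / (4 * d)) := by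
    have : 1 / (4 * d) < (1 : ℝ) := by rw [div_lt_one (by positivity)]; linarith
    linarith
  have hphi : 1 + 2 * d * (1 - (1 + 1 / (4 * d))) = (1 / 2 : ℝ) := by
    field_simp; ring
  exact ⟨⟨hbound, hgt⟩, ⟨by simpa only [hphi] using hbound, hgt⟩⟩
end

section
/- Let d ≥ 1 be an integer, ℒ = ℤ^d × ℕ, and let (Ω, 𝔽, P) be a probability space carrying, for each v ∈ ℒ, a measurable indicator random variable X_v : Ω → {0, 1} (X_v = 1 meaning v is closed). Assume: (i) 2-dependence: for every finite set S ⊆ ℒ whose elements are pairwise at ℓ∞-distance greater than 2 (viewing ℒ ⊆ ℤ^{d+1}), the family (X_v)_{v ∈ S} is mutually independent; and (ii) P(X_v = 1) ≤ ε for all v ∈ ℒ, where 0 ≤ ε ≤ 1. Then for every integer n ≥ 1 and every injective sequence v_0, v_1, …, v_n in ℒ with ‖v_{i+1} − v_i‖_1 = 1 for all i, P(X_{v_0} = 1 and … and X_{v_n} = 1) ≤ ε^{n/5^{d+1}} (real exponent). -/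
/-!
Every site of `ℤ^d × ℕ` has at most `5^(d+1)` sites (itself included) within `ℓ∞`-distance `2`.
Greedily picking a site of the path and discarding its neighbours therefore extracts from the
`n + 1` sites of the path a subset `T` of pairwise `ℓ∞`-distance greater than `2` with
`n + 1 ≤ 5^(d+1) |T|`. By 2-dependence the events on `T` are independent, so the probability
that the whole path is closed is at most `ε^|T| ≤ ε^(n / 5^(d+1))`.
-/

open MeasureTheory ProbabilityTheory Finset

namespace Finset

variable {α : Type*} [DecidableEq α]

theorem exists_subset_pairwise_not_rel_card_le_mul (r : α → α → Prop) [DecidableRel r]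
    [Std.Refl r] [Std.Symm r] (K : ℕ) (W : Finset α)
    (hK : ∀ w ∈ W, #(W.filter (r · w)) ≤ K) :
    ∃ T ⊆ W, (T : Set α).Pairwise (fun x y => ¬ r x y) ∧ #W ≤ K * #T := by
  induction W using Finset.strongInduction with
  | H W ih =>
  obtain rfl | ⟨w, hw⟩ := W.eq_empty_or_nonempty
  · exact ⟨∅, empty_subset _, by simp, by simp⟩
  set W' := W.filter (¬ r · w)
  have hW'W : W' ⊂ W := filter_ssubset.2 ⟨w, hw, not_not.2 (refl w)⟩
  obtain ⟨T, hTW', hT, hcard⟩ := ih W' hW'W fun u hu =>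
    (card_le_card (filter_subset_filter _ hW'W.subset)).trans (hK u (hW'W.subset hu))
  have hfar : ∀ u ∈ T, ¬ r u w := fun u hu => (mem_filter.1 (hTW' hu)).2
  have hwT : w ∉ T := fun h => hfar w h (refl w)
  refine ⟨insert w T, insert_subset hw (hTW'.trans hW'W.subset), ?_, ?_⟩
  · rw [coe_insert]
    exact hT.insert fun u hu _ => ⟨fun h => hfar u hu (symm h), hfar u hu⟩
  · calc #W = #(W.filter (r · w)) + #W' := (card_filter_add_card_filter_not _).symm
      _ ≤ K + K * #T := add_le_add (hK w hw) hcard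
      _ = K * #(insert w T) := by rw [card_insert_of_notMem hwT]; ring

end Finset

theorem ProbabilityTheory.iIndepSet.measure_biInter_le_pow {Ω ι : Type*} [MeasurableSpace Ω]
    {μ : Measure Ω} {S : Finset ι} {A : ι → Set Ω} (h : iIndepSet (fun i : S => A i) μ)
    {c : ENNReal} (hc : ∀ i ∈ S, μ (A i) ≤ c) :
    μ (⋂ i ∈ S, A i) ≤ c ^ #S :=
  calc μ (⋂ i ∈ S, A i) = μ (⋂ i : S, A i) := by rw [Set.iInter_subtype]
    _ = ∏ i : S, μ (A i) := by simpa using h.meas_biInter univ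
    _ ≤ ∏ _i : S, c := prod_le_prod' fun i _ => hc i i.2
    _ = c ^ #S := by simp

def InftyDistLeTwo (d : ℕ) (v w : (Fin d → ℤ) × ℕ) : Prop :=
  (∀ i, |v.1 i - w.1 i| ≤ 2) ∧ |(v.2 : ℤ) - w.2| ≤ 2

section InftyDistLeTwo

variable {d : ℕ}

instance : DecidableRel (InftyDistLeTwo d) := fun _ _ => inferInstanceAs (Decidable (_ ∧ _))

instance : Std.Refl (InftyDistLeTwo d) :=
  ⟨fun _ => by simp [InftyDistLeTwo]⟩

instance : Std.Symm (InftyDistLeTwo d) :=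
  ⟨fun v w ⟨h1, h2⟩ =>
    ⟨fun i => abs_sub_comm (v.1 i) (w.1 i) ▸ h1 i, abs_sub_comm (v.2 : ℤ) w.2 ▸ h2⟩⟩

theorem not_inftyDistLeTwo_iff {v w : (Fin d → ℤ) × ℕ} :
    ¬ InftyDistLeTwo d v w ↔ (∃ i, 2 < |v.1 i - w.1 i|) ∨ 2 < |(v.2 : ℤ) - (w.2 : ℤ)| := by
  simp only [InftyDistLeTwo, not_and_or, not_forall, not_le]

theorem card_filter_inftyDistLeTwo_le (W : Finset ((Fin d → ℤ) × ℕ)) (w : (Fin d → ℤ) × ℕ) :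
    #(W.filter (InftyDistLeTwo d · w)) ≤ 5 ^ (d + 1) := by
  let box := (Fintype.piFinset fun _ : Fin d => Icc (-2 : ℤ) 2) ×ˢ Icc (-2 : ℤ) 2
  let offset (u : (Fin d → ℤ) × ℕ) : (Fin d → ℤ) × ℤ := (u.1 - w.1, (u.2 : ℤ) - w.2)
  have hmaps : ∀ u ∈ W.filter (InftyDistLeTwo d · w), offset u ∈ box := by
    intro u hu
    obtain ⟨h1, h2⟩ := (mem_filter.1 hu).2
    simp only [box, offset, mem_product, Fintype.mem_piFinset, mem_Icc, Pi.sub_apply]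
    exact ⟨fun i => abs_le.1 (h1 i), abs_le.1 h2⟩
  have hinj : Set.InjOn offset (W.filter (InftyDistLeTwo d · w)) := by
    intro a _ b _ hab
    simp only [offset, Prod.mk.injEq, sub_left_inj] at hab
    exact Prod.ext hab.1 (by exact_mod_cast hab.2)
  calc #(W.filter (InftyDistLeTwo d · w)) ≤ #box := card_le_card_of_injOn offset hmaps hinj
    _ = 5 ^ (d + 1) := by simp [box, Int.card_Icc, pow_succ]

end InftyDistLeTwo

theorem closed_path_probability_bound_general
    {Ω : Type*} [MeasurableSpace Ω] (P : Measure Ω) [IsProbabilityMeasure P]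
    (d : ℕ) (ε : ℝ) (hε0 : 0 ≤ ε) (hε1 : ε ≤ 1)
    (A : (Fin d → ℤ) × ℕ → Set Ω)
    (hAprob : ∀ v, P (A v) ≤ ENNReal.ofReal ε)
    (h2dep : ∀ S : Finset ((Fin d → ℤ) × ℕ),
      (∀ v ∈ S, ∀ w ∈ S, v ≠ w →
        (∃ i, 2 < |v.1 i - w.1 i|) ∨ 2 < |(v.2 : ℤ) - (w.2 : ℤ)|) →
      iIndepSet (fun v : {x // x ∈ S} => A v.1) P)
    (n : ℕ) (v : Fin (n + 1) → (Fin d → ℤ) × ℕ)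
    (hinj : Function.Injective v) :
    (P (⋂ i, A (v i))).toReal ≤ ε ^ ((n : ℝ) / 5 ^ (d + 1)) := by
  obtain ⟨T, hTv, hTsep, hcard⟩ := exists_subset_pairwise_not_rel_card_le_mul (InftyDistLeTwo d)
    _ (univ.image v)
    fun w _ => card_filter_inftyDistLeTwo_le _ w
  have hindep := h2dep T fun x hx y hy hxy => not_inftyDistLeTwo_iff.1 (hTsep hx hy hxy)
  have hsub : ⋂ i, A (v i) ⊆ ⋂ w ∈ T, A w := by
    refine Set.subset_iInter₂ fun w hw => ?_
    obtain ⟨i, -, rfl⟩ := mem_image.1 (hTv hw)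
    exact Set.iInter_subset _ i
  have hprob : P (⋂ i, A (v i)) ≤ ENNReal.ofReal ε ^ #T :=
    (measure_mono hsub).trans (hindep.measure_biInter_le_pow fun w _ => hAprob w)
  have hexp : (n : ℝ) / 5 ^ (d + 1) ≤ #T := by
    rw [card_image_of_injective _ hinj, card_univ, Fintype.card_fin] at hcard
    rw [div_le_iff₀ (by positivity)]
    exact_mod_cast (by linarith : n ≤ #T * 5 ^ (d + 1))
  calc (P (⋂ i, A (v i))).toReal ≤ (ENNReal.ofReal ε ^ #T).toReal :=
        ENNReal.toReal_mono (by simp) hprob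
    _ = ε ^ (#T : ℝ) := by rw [ENNReal.toReal_pow, ENNReal.toReal_ofReal hε0, Real.rpow_natCast]
    _ ≤ ε ^ ((n : ℝ) / 5 ^ (d + 1)) :=
        Real.rpow_le_rpow_of_exponent_ge' hε0 hε1 (by positivity) hexp

/-- Consider a 2-dependent site percolation process on
`ℒ = ℤ^d × ℕ ⊆ ℤ^{d+1}` given by events `A v` (`v` closed), with `P(A v) ≤ ε`, such that
any subfamily indexed by sites pairwise at `ℓ∞`-distance greater than `2` is mutually
independent. Then for every self-avoiding path `v 0, …, v n` (consecutive sites at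
`ℓ1`-distance one), `P(all sites of the path are closed) ≤ ε^{n/5^{d+1}}`. -/
theorem closed_path_probability_bound
    {Ω : Type*} [MeasurableSpace Ω] (P : Measure Ω) [IsProbabilityMeasure P]
    (d : ℕ) (hd : 1 ≤ d) (ε : ℝ) (hε0 : 0 ≤ ε) (hε1 : ε ≤ 1)
    (A : (Fin d → ℤ) × ℕ → Set Ω) (hAmeas : ∀ v, MeasurableSet (A v))
    (hAprob : ∀ v, P (A v) ≤ ENNReal.ofReal ε)
    (h2dep : ∀ S : Finset ((Fin d → ℤ) × ℕ),
      (∀ v ∈ S, ∀ w ∈ S, v ≠ w →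
        (∃ i, 2 < |v.1 i - w.1 i|) ∨ 2 < |(v.2 : ℤ) - (w.2 : ℤ)|) →
      iIndepSet (fun v : {x // x ∈ S} => A v.1) P)
    (n : ℕ) (hn : 1 ≤ n) (v : Fin (n + 1) → (Fin d → ℤ) × ℕ)
    (hinj : Function.Injective v)
    (hpath : ∀ i : Fin n,
      (∑ i', |(v i.castSucc).1 i' - (v i.succ).1 i'|)
        + |((v i.castSucc).2 : ℤ) - ((v i.succ).2 : ℤ)| = 1) :
    (P (⋂ i, A (v i))).toReal ≤ ε ^ ((n : ℝ) / 5 ^ (d + 1)) :=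
  closed_path_probability_bound_general P d ε hε0 hε1 A hAprob h2dep n v hinj
end

section
/- Let d ≥ 1 be an integer, ℒ = ℤ^d × ℕ with directed edges (m, n) → (m', n') whenever ‖m − m'‖_1 + |n − n'| = 1 and n ≤ n', and let ε = (4d+2)^{−5^{d+1}}. Let (Ω, 𝔽, P) be a probability space carrying, for each v ∈ ℒ, a measurable indicator random variable X_v : Ω → {0, 1} (X_v = 1 meaning v is closed), such that: (i) for every finite set S ⊆ ℒ whose elements are pairwise at ℓ∞-distance greater than 2 (viewing ℒ ⊆ ℤ^{d+1}), the family (X_v)_{v ∈ S} is mutually independent; and (ii) P(X_v = 1) ≤ ε for all v ∈ ℒ. Then for every integer n ≥ 1, the probability that there exists an injective directed path v_0 = (0,0), v_1, …, v_n in ℒ (each consecutive pair joined by a directed edge) with X_{v_i} = 1 for all i = 0, …, n, is at most (1/2)^n. -/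
/-!
A self-avoiding directed path of length `n` visits `n + 1` distinct sites. Every site is within
`ℓ∞`-distance `2` of a member of a maximal subfamily of these sites at pairwise `ℓ∞`-distance
greater than `2`, and such a ball holds `5^{d+1}` sites, so the subfamily has at least
`(n + 1) / 5^{d+1}` members. They are
closed independently, so the whole path is closed with probability at most
`ε^{(n+1)/5^{d+1}} = (4d+2)^{-(n+1)}`. There are at most `(2d+1)^n` such paths, and the union
bound gives `(2d+1)^n (4d+2)^{-(n+1)} ≤ 2^{-n}`.
-/

open MeasureTheory ProbabilityTheory ENNReal Function Set

theorem Finset.exists_subset_pairwise_card_le_mul {α : Type*} {r : α → α → Prop}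
    [DecidableRel r] (hsymm : ∀ x y, r x y → r y x) (hirrefl : ∀ x, ¬ r x x)
    (s : Finset α) {K : ℕ} (hK : ∀ x ∈ s, (s.filter fun y => ¬ r x y).card ≤ K) :
    ∃ t ⊆ s, (t : Set α).Pairwise r ∧ s.card ≤ t.card * K := by
  classical
  obtain ⟨t, ht, hmax⟩ := (s.powerset.filter fun t : Finset α => (t : Set α).Pairwise r)
    |>.exists_max_image Finset.card ⟨∅, by simp⟩
  rw [Finset.mem_filter, Finset.mem_powerset] at ht
  obtain ⟨hts, htr⟩ := ht
  have hcover : ∀ x ∈ s, ∃ y ∈ t, ¬ r y x := by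
    intro x hx
    by_contra! hfar
    have hxt : x ∉ t := fun hxt => hirrefl x (hfar x hxt)
    have hins := hmax (insert x t) <| by
      rw [Finset.mem_filter, Finset.mem_powerset, Finset.coe_insert]
      exact ⟨Finset.insert_subset hx hts,
        htr.insert_of_notMem hxt fun y hy => ⟨hsymm _ _ (hfar y hy), hfar y hy⟩⟩
    rw [Finset.card_insert_of_notMem hxt] at hins
    omega
  refine ⟨t, hts, htr, ?_⟩
  calc s.card ≤ (t.biUnion fun y => s.filter fun x => ¬ r y x).card :=
        Finset.card_le_card fun x hx => by
          obtain ⟨y, hy, hyx⟩ := hcover x hx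
          exact Finset.mem_biUnion.2 ⟨y, hy, Finset.mem_filter.2 ⟨hx, hyx⟩⟩
    _ ≤ t.card * K := Finset.card_biUnion_le_card_mul _ _ _ fun y hy => hK y (hts hy)

theorem MeasureTheory.measure_biUnion_le_ncard_mul {Ω β : Type*} [MeasurableSpace Ω]
    (μ : Measure Ω) {s : Set β} (hs : s.Finite) {f : β → Set Ω} {c : ℝ≥0∞}
    (hf : ∀ b ∈ s, μ (f b) ≤ c) : μ (⋃ b ∈ s, f b) ≤ s.ncard * c := by
  calc μ (⋃ b ∈ s, f b) = μ (⋃ b ∈ hs.toFinset, f b) := by simp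
    _ ≤ ∑ b ∈ hs.toFinset, μ (f b) := measure_biUnion_finset_le _ _
    _ ≤ hs.toFinset.card • c :=
        Finset.sum_le_card_nsmul _ _ _ fun b hb => hf b (hs.mem_toFinset.1 hb)
    _ = s.ncard * c := by rw [nsmul_eq_mul, ncard_eq_toFinset_card s hs]

theorem ProbabilityTheory.iIndepSet.measure_iInter_le_pow_card {Ω ι : Type*}
    [MeasurableSpace Ω] {μ : Measure Ω} [Fintype ι] {A : ι → Set Ω} (h : iIndepSet A μ)
    {c : ℝ≥0∞} (hA : ∀ i, μ (A i) ≤ c) : μ (⋂ i, A i) ≤ c ^ Fintype.card ι := by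
  simpa using (h.meas_biInter Finset.univ).trans_le
    (Finset.prod_le_pow_card _ _ _ fun i _ => hA i)

theorem Int.exists_eq_pi_single_of_sum_abs_eq_one {ι : Type*} [Fintype ι] [DecidableEq ι]
    {f : ι → ℤ} (h : ∑ k, |f k| = 1) : ∃ k, ∃ u : ℤˣ, f = Pi.single k (u : ℤ) := by
  obtain ⟨k, hk⟩ : ∃ k, f k ≠ 0 := by
    by_contra! h0
    simp [h0] at h
  have hsplit := Finset.add_sum_erase Finset.univ (fun j => |f j|) (Finset.mem_univ k)
  have hrest : 0 ≤ ∑ j ∈ Finset.univ.erase k, |f j| :=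
    Finset.sum_nonneg fun _ _ => abs_nonneg _
  have hk1 : |f k| = 1 := by have := Int.one_le_abs hk; omega
  have hzero : ∀ j ∈ Finset.univ.erase k, |f j| = 0 :=
    (Finset.sum_eq_zero_iff_of_nonneg fun _ _ => abs_nonneg _).1 (by omega)
  refine ⟨k, (Int.isUnit_iff_abs_eq.2 hk1).unit, funext fun j => ?_⟩
  by_cases hj : j = k
  · subst hj
    simp
  · simpa [hj] using hzero j (by simp [hj])

namespace OrientedPercolation

abbrev Site (d : ℕ) := (Fin d → ℤ) × ℕ

variable {d : ℕ}

def FarApart (a b : Site d) : Prop :=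
  (∃ i, 2 < |a.1 i - b.1 i|) ∨ 2 < |(a.2 : ℤ) - (b.2 : ℤ)|

instance : DecidableRel (@FarApart d) := fun a b => by
  unfold FarApart
  infer_instance

theorem farApart_comm {a b : Site d} : FarApart a b ↔ FarApart b a := by
  simp only [FarApart, abs_sub_comm]

theorem not_farApart_self (a : Site d) : ¬ FarApart a a := by
  simp [FarApart]

theorem card_filter_not_farApart_le (s : Finset (Site d)) (a : Site d) :
    (s.filter fun b => ¬ FarApart a b).card ≤ 5 ^ (d + 1) := by
  let box : Finset (Site d) :=
    Fintype.piFinset (fun k => Finset.Icc (a.1 k - 2) (a.1 k + 2)) ×ˢ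
      Finset.Icc (a.2 - 2) (a.2 + 2)
  calc (s.filter fun b => ¬ FarApart a b).card ≤ box.card :=
        Finset.card_le_card fun b hb => by
          simp only [Finset.mem_filter, FarApart, not_or, not_exists, not_lt, abs_le] at hb
          simp only [box, Finset.mem_product, Fintype.mem_piFinset, Finset.mem_Icc]
          refine ⟨fun k => ?_, ?_⟩
          · have := hb.2.1 k
            omega
          · have := hb.2.2
            omega
    _ ≤ 5 ^ (d + 1) := by
        rw [Finset.card_product, Fintype.card_piFinset, pow_succ]
        have hside : ∀ k, (a.1 k + 2 + 1 - (a.1 k - 2)).toNat = 5 := fun k => by omega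
        simp only [Int.card_Icc, Nat.card_Icc, hside, Finset.prod_const, Finset.card_univ,
          Fintype.card_fin]
        gcongr
        omega

theorem exists_subset_pairwise_farApart (s : Finset (Site d)) :
    ∃ t ⊆ s, (t : Set (Site d)).Pairwise FarApart ∧ s.card ≤ t.card * 5 ^ (d + 1) :=
  s.exists_subset_pairwise_card_le_mul (r := FarApart) (fun _ _ => farApart_comm.1)
    not_farApart_self fun a _ => card_filter_not_farApart_le s a

theorem measure_biInter_le_pow_card {Ω : Type*} [MeasurableSpace Ω] (P : Measure Ω)
    (A : Site d → Set Ω) {q : ℝ≥0∞} (hq : q ≤ 1)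
    (hA : ∀ v, P (A v) ≤ q ^ 5 ^ (d + 1))
    (h2dep : ∀ S : Finset (Site d), (S : Set (Site d)).Pairwise FarApart →
      iIndepSet (fun v : {x // x ∈ S} => A v.1) P)
    (s : Finset (Site d)) : P (⋂ v ∈ s, A v) ≤ q ^ s.card := by
  obtain ⟨t, hts, ht, hcard⟩ := exists_subset_pairwise_farApart s
  calc P (⋂ v ∈ s, A v) ≤ P (⋂ v : {x // x ∈ t}, A v) :=
        measure_mono fun ω hω => mem_iInter.2 fun v => mem_iInter₂.1 hω v (hts v.2)
    _ ≤ (q ^ 5 ^ (d + 1)) ^ Fintype.card {x // x ∈ t} :=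
        (h2dep t ht).measure_iInter_le_pow_card fun v => hA v
    _ ≤ q ^ s.card := by
        rw [Fintype.card_coe, ← pow_mul]
        exact pow_le_pow_right_of_le_one' hq (by linarith)

def IsDirectedStep (a b : Site d) : Prop :=
  (∑ k, |a.1 k - b.1 k|) + |(a.2 : ℤ) - (b.2 : ℤ)| = 1 ∧ a.2 ≤ b.2

def selfAvoidingPaths (d n : ℕ) : Set (Fin (n + 1) → Site d) :=
  {v | Injective v ∧ v 0 = (0, 0) ∧ ∀ i : Fin n, IsDirectedStep (v i.castSucc) (v i.succ)}

def move (a : Site d) : Option (Fin d × ℤˣ) → Site d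
  | none => (a.1, a.2 + 1)
  | some (k, u) => (a.1 + Pi.single k (u : ℤ), a.2)

theorem IsDirectedStep.exists_move {a b : Site d} (h : IsDirectedStep a b) :
    ∃ m, move a m = b := by
  obtain ⟨hdist, hle⟩ := h
  have hspace : 0 ≤ ∑ k, |a.1 k - b.1 k| := Finset.sum_nonneg fun _ _ => abs_nonneg _
  rcases hle.eq_or_lt with htime | htime
  · obtain ⟨k, u, hku⟩ := Int.exists_eq_pi_single_of_sum_abs_eq_one (f := b.1 - a.1)
      (by simpa [abs_sub_comm, htime] using hdist)
    exact ⟨some (k, u), Prod.ext (by simp [move, ← hku]) htime⟩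
  · rw [abs_of_neg (by omega)] at hdist
    have hspace0 : ∀ k ∈ Finset.univ, |a.1 k - b.1 k| = 0 :=
      (Finset.sum_eq_zero_iff_of_nonneg fun _ _ => abs_nonneg _).1 (by omega)
    refine ⟨none, Prod.ext (funext fun k => ?_) ?_⟩
    · simpa [move, sub_eq_zero] using hspace0 k (Finset.mem_univ k)
    · simp only [move]
      omega

theorem eq_of_move_eq {n : ℕ} {v w : Fin (n + 1) → Site d}
    (m : Fin n → Option (Fin d × ℤˣ)) (h0 : v 0 = w 0)
    (hv : ∀ i, move (v i.castSucc) (m i) = v i.succ)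
    (hw : ∀ i, move (w i.castSucc) (m i) = w i.succ) : v = w := by
  funext i
  induction i using Fin.induction with
  | zero => exact h0
  | succ i ih => rw [← hv, ← hw, ih]

theorem exists_injOn_selfAvoidingPaths (d n : ℕ) :
    ∃ f : (Fin (n + 1) → Site d) → Fin n → Option (Fin d × ℤˣ),
      InjOn f (selfAvoidingPaths d n) := by
  have hmove : ∀ v ∈ selfAvoidingPaths d n, ∀ i : Fin n,
      ∃ m, move (v i.castSucc) m = v i.succ := fun v hv i => (hv.2.2 i).exists_move
  choose! moves hmoves using hmove
  exact ⟨moves, fun v hv w hw hvw =>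
    eq_of_move_eq (moves v) (hv.2.1.trans hw.2.1.symm) (hmoves v hv) (hvw ▸ hmoves w hw)⟩

theorem selfAvoidingPaths_finite (d n : ℕ) : (selfAvoidingPaths d n).Finite :=
  have ⟨_, hinj⟩ := exists_injOn_selfAvoidingPaths d n
  Finite.of_injOn (mapsTo_univ _ _) hinj finite_univ

theorem ncard_selfAvoidingPaths_le (d n : ℕ) :
    (selfAvoidingPaths d n).ncard ≤ (2 * d + 1) ^ n := by
  obtain ⟨f, hinj⟩ := exists_injOn_selfAvoidingPaths d n
  calc (selfAvoidingPaths d n).ncard ≤ (univ : Set (Fin n → Option (Fin d × ℤˣ))).ncard :=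
        ncard_le_ncard_of_injOn f (fun _ _ => mem_univ _) hinj finite_univ
    _ = (2 * d + 1) ^ n := by
        simp [Nat.card_eq_fintype_card, mul_comm]

theorem two_mul_add_one_pow_mul_inv_pow_succ_le (d n : ℕ) :
    (2 * d + 1 : ℝ≥0∞) ^ n * (4 * d + 2 : ℝ≥0∞)⁻¹ ^ (n + 1) ≤ (1 / 2) ^ n := by
  have hinv : (4 * d + 2 : ℝ≥0∞)⁻¹ = 2⁻¹ * (2 * d + 1 : ℝ≥0∞)⁻¹ := by
    rw [show (4 * d + 2 : ℝ≥0∞) = 2 * (2 * d + 1) by ring,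
      ENNReal.mul_inv (by simp) (by simp)]
  calc (2 * d + 1 : ℝ≥0∞) ^ n * (4 * d + 2 : ℝ≥0∞)⁻¹ ^ (n + 1)
      ≤ (2 * d + 1 : ℝ≥0∞) ^ n * (4 * d + 2 : ℝ≥0∞)⁻¹ ^ n :=
        mul_le_mul_right (pow_le_pow_right_of_le_one'
          (ENNReal.inv_le_one.2 (one_le_two.trans le_add_self)) n.le_succ) _
    _ = (1 / 2) ^ n := by
        rw [← mul_pow, hinv, mul_left_comm,
          ENNReal.mul_inv_cancel (by positivity) (by finiteness), mul_one, one_div]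

end OrientedPercolation

open OrientedPercolation

theorem no_percolation_of_closed_sites_general
    {Ω : Type*} [MeasurableSpace Ω] (P : Measure Ω)
    (d : ℕ)
    (A : (Fin d → ℤ) × ℕ → Set Ω)
    (hAprob : ∀ v, P (A v)
      ≤ ENNReal.ofReal (((4 * d + 2 : ℝ) ^ (5 ^ (d + 1)))⁻¹))
    (h2dep : ∀ S : Finset ((Fin d → ℤ) × ℕ),
      (∀ v ∈ S, ∀ w ∈ S, v ≠ w →
        (∃ i, 2 < |v.1 i - w.1 i|) ∨ 2 < |(v.2 : ℤ) - (w.2 : ℤ)|) →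
      iIndepSet (fun v : {x // x ∈ S} => A v.1) P)
    (n : ℕ) :
    P {ω | ∃ v : Fin (n + 1) → (Fin d → ℤ) × ℕ,
        Function.Injective v ∧ v 0 = (0, 0) ∧
        (∀ i : Fin n,
          (∑ i', |(v i.castSucc).1 i' - (v i.succ).1 i'|)
              + |((v i.castSucc).2 : ℤ) - ((v i.succ).2 : ℤ)| = 1 ∧
          (v i.castSucc).2 ≤ (v i.succ).2) ∧
        ∀ i, ω ∈ A (v i)}
      ≤ (1 / 2 : ℝ≥0∞) ^ n := by
  set q : ℝ≥0∞ := (4 * d + 2 : ℝ≥0∞)⁻¹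
  have hq : q ≤ 1 := ENNReal.inv_le_one.2 (one_le_two.trans le_add_self)
  have hA : ∀ v, P (A v) ≤ q ^ 5 ^ (d + 1) := fun v => (hAprob v).trans_eq <| by
    rw [ENNReal.ofReal_inv_of_pos (by positivity), ENNReal.ofReal_pow (by positivity),
      ENNReal.inv_pow]
    norm_cast
    push_cast
    rfl
  have hpath : ∀ v ∈ selfAvoidingPaths d n, P (⋂ i, A (v i)) ≤ q ^ (n + 1) := fun v hv => by
    simpa [Finset.card_image_of_injective _ hv.1] using
      measure_biInter_le_pow_card P A hq hA h2dep (Finset.univ.image v)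
  calc _ ≤ P (⋃ v ∈ selfAvoidingPaths d n, ⋂ i, A (v i)) :=
        measure_mono <| by
          rintro ω ⟨v, hinj, h0, hstep, hclosed⟩
          exact mem_biUnion (show v ∈ selfAvoidingPaths d n from ⟨hinj, h0, hstep⟩)
            (mem_iInter.2 hclosed)
    _ ≤ (selfAvoidingPaths d n).ncard * q ^ (n + 1) :=
        measure_biUnion_le_ncard_mul P (selfAvoidingPaths_finite d n) hpath
    _ ≤ (2 * d + 1) ^ n * q ^ (n + 1) := by
        gcongr
        exact_mod_cast ncard_selfAvoidingPaths_le d n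
    _ ≤ (1 / 2) ^ n := two_mul_add_one_pow_mul_inv_pow_succ_le d n

/-- Consider 2-dependent oriented site percolation on
`ℒ = ℤ^d × ℕ ⊆ ℤ^{d+1}` (directed edges `(m,n) → (m',n')` iff `‖m−m'‖₁ + |n−n'| = 1`
and `n ≤ n'`), given by events `A v` (`v` closed) with `P(A v) ≤ ε` where
`ε = (4d+2)^{−5^{d+1}}`, such that any subfamily indexed by sites pairwise at
`ℓ∞`-distance greater than `2` is mutually independent. Then for every `n ≥ 1`, the
probability that some injective directed path of length `n` starting at the origin is
entirely closed is at most `(1/2)^n`. -/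
theorem no_percolation_of_closed_sites
    {Ω : Type*} [MeasurableSpace Ω] (P : Measure Ω) [IsProbabilityMeasure P]
    (d : ℕ) (hd : 1 ≤ d)
    (A : (Fin d → ℤ) × ℕ → Set Ω) (hAmeas : ∀ v, MeasurableSet (A v))
    (hAprob : ∀ v, P (A v)
      ≤ ENNReal.ofReal (((4 * d + 2 : ℝ) ^ (5 ^ (d + 1)))⁻¹))
    (h2dep : ∀ S : Finset ((Fin d → ℤ) × ℕ),
      (∀ v ∈ S, ∀ w ∈ S, v ≠ w →
        (∃ i, 2 < |v.1 i - w.1 i|) ∨ 2 < |(v.2 : ℤ) - (w.2 : ℤ)|) →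
      iIndepSet (fun v : {x // x ∈ S} => A v.1) P)
    (n : ℕ) (hn : 1 ≤ n) :
    P {ω | ∃ v : Fin (n + 1) → (Fin d → ℤ) × ℕ,
        Function.Injective v ∧ v 0 = (0, 0) ∧
        (∀ i : Fin n,
          (∑ i', |(v i.castSucc).1 i' - (v i.succ).1 i'|)
              + |((v i.castSucc).2 : ℤ) - ((v i.succ).2 : ℤ)| = 1 ∧
          (v i.castSucc).2 ≤ (v i.succ).2) ∧
        ∀ i, ω ∈ A (v i)}
      ≤ (1 / 2 : ℝ≥0∞) ^ n :=
  no_percolation_of_closed_sites_general P d A hAprob h2dep n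
end
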